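/- arXiv:2304.01587 — 3 statements merged into one kernel-verified Lean document; each statement's English description precedes it below -/
import Mathlib

section
/- Let d ≥ 2 be an integer and γ ∈ [2(d-1)/(2d-1), 1]. Define β := (1/(d+1))·((d-1)/γ + 1)·[(1/d)·((d-1)/γ + 1)² − d]. Then β < 1. -/
/-! With `s = (d - 1)/γ + 1`, the exponent is `β = s (s² - d²) / (d (d + 1))`, and the lower bound
on `γ` says exactly `s ≤ d + 1/2`. For `s ≤ d` the numerator is not positive, and for
`d < s ≤ d + 1/2` it is at most `(d + 1/2) · 1/2 · (2d + 1/2) = d² + 3d/4 + 1/8 < d (d + 1)`. -/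

lemma mul_sq_sub_sq_lt_mul_add_one {d s : ℝ} (hd : 1 / 2 < d) (hs₀ : 0 < s)
    (hs : s ≤ d + 1 / 2) : s * (s ^ 2 - d ^ 2) < d * (d + 1) := by
  rcases le_or_gt s d with hsd | hds
  · have : s ^ 2 - d ^ 2 ≤ 0 := by nlinarith
    nlinarith [mul_nonpos_of_nonneg_of_nonpos hs₀.le this]
  · calc s * (s ^ 2 - d ^ 2) = s * (s - d) * (s + d) := by ring
      _ ≤ (d + 1 / 2) * (1 / 2) * (2 * d + 1 / 2) := by
        have : 0 < s - d := by linarith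
        gcongr ?_ * ?_ * ?_ <;> linarith
      _ < d * (d + 1) := by nlinarith

lemma sub_one_div_le_of_le {d γ : ℝ} (hd : 1 < d) (hγ : 2 * (d - 1) / (2 * d - 1) ≤ γ) :
    (d - 1) / γ ≤ d - 1 / 2 := by
  have hlow : 0 < 2 * (d - 1) / (2 * d - 1) := by apply div_pos <;> linarith
  calc (d - 1) / γ ≤ (d - 1) / (2 * (d - 1) / (2 * d - 1)) :=
        div_le_div_of_nonneg_left (by linarith) hlow hγ
    _ = d - 1 / 2 := by
      have : d - 1 ≠ 0 := by linarith
      field_simp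

theorem beta_lt_one_general (d : ℕ) (hd : 2 ≤ d) (γ : ℝ)
    (hγ1 : 2 * ((d : ℝ) - 1) / (2 * (d : ℝ) - 1) ≤ γ) :
    (1 / ((d : ℝ) + 1)) * (((d : ℝ) - 1) / γ + 1) *
        ((1 / (d : ℝ)) * (((d : ℝ) - 1) / γ + 1) ^ 2 - d) < 1 := by
  have hd' : (2 : ℝ) ≤ d := by exact_mod_cast hd
  have hγ : 0 < γ := (div_pos (by linarith) (by linarith)).trans_le hγ1
  set s := ((d : ℝ) - 1) / γ + 1
  have hs₀ : 0 < s := by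
    have : 0 ≤ ((d : ℝ) - 1) / γ := div_nonneg (by linarith) hγ.le
    linarith
  have hs : s ≤ d + 1 / 2 := by linarith [sub_one_div_le_of_le (by linarith) hγ1]
  have hβ : 1 / ((d : ℝ) + 1) * s * (1 / (d : ℝ) * s ^ 2 - d)
      = s * (s ^ 2 - (d : ℝ) ^ 2) / (d * (d + 1)) := by
    field_simp
  rw [hβ, div_lt_one (by positivity)]
  exact mul_sq_sub_sq_lt_mul_add_one (by linarith) hs₀ hs

/-- For `d ≥ 2` and `γ ∈ [2(d-1)/(2d-1), 1]`, the exponent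
`β = (1/(d+1))·((d-1)/γ + 1)·[(1/d)·((d-1)/γ + 1)² − d]` is less than 1. -/
theorem beta_lt_one (d : ℕ) (hd : 2 ≤ d) (γ : ℝ)
    (hγ1 : 2 * ((d : ℝ) - 1) / (2 * (d : ℝ) - 1) ≤ γ) (hγ2 : γ ≤ 1) :
    (1 / ((d : ℝ) + 1)) * (((d : ℝ) - 1) / γ + 1) *
        ((1 / (d : ℝ)) * (((d : ℝ) - 1) / γ + 1) ^ 2 - d) < 1 :=
  beta_lt_one_general d hd γ hγ1
end

section
/- Let d ≥ 2, m ∈ ℕ with mγ ≥ 1 and m(1−γ) ≥ 4, where γ ∈ ((d-1)/d, 1). Define ψ: ℝ^{d-1} → [0, 1/2] by ψ(x') = (1/2 − ‖x' − (1/2,…,1/2)‖_∞)·1_{(0,1)^{d-1}}(x'), g_j(x') = Σ_{k ∈ {0,…,2^{jm}−1}^{d-1}} ψ(2^{jm}x' − k) for x' ∈ (0,1)^{d-1}, and f(x') = Σ_{j=0}^∞ 2^{−γjm} g_j(x'). Then f is γ-Hölder continuous with respect to the ∞-norm, with Hölder constant 3: |f(x') − f(y')| ≤ 3·‖x' − y'‖_∞^γ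 for all x', y' ∈ (0,1)^{d-1}. -/
/-- The tent function `ψ(x') = (1/2 − ‖x' − (1/2,…,1/2)‖_∞)·1_{(0,1)^{n}}(x')`
(the norm on `Fin n → ℝ` is the sup norm). -/
noncomputable def sawPsi (n : ℕ) (x : Fin n → ℝ) : ℝ :=
  Set.indicator {y : Fin n → ℝ | ∀ i, 0 < y i ∧ y i < 1}
    (fun y => 1 / 2 - ‖y - fun _ => (1 / 2 : ℝ)‖) x

/-- `g_j(x') = Σ_{k ∈ {0,…,2^{jm}−1}^{n}} ψ(2^{jm}·x' − k)`. -/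
noncomputable def sawG (n m j : ℕ) (x : Fin n → ℝ) : ℝ :=
  ∑ k : Fin n → Fin (2 ^ (j * m)),
    sawPsi n (fun i => 2 ^ (j * m) * x i - (k i : ℝ))

/-- Partial sum `f_{N−1}(x') = Σ_{j=0}^{N−1} 2^{−γjm}·g_j(x')` (so `sawF n m γ 0 = f_{−1} ≡ 0`). -/
noncomputable def sawFpartial (n m : ℕ) (γ : ℝ) (N : ℕ) (x : Fin n → ℝ) : ℝ :=
  ∑ j ∈ Finset.range N, (2 : ℝ) ^ (-(γ * ((j : ℝ) * m))) * sawG n m j x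

/-- The sawtooth boundary function `f(x') = Σ_{j=0}^∞ 2^{−γjm}·g_j(x')`. -/
noncomputable def sawF (n m : ℕ) (γ : ℝ) (x : Fin n → ℝ) : ℝ :=
  ∑' j : ℕ, (2 : ℝ) ^ (-(γ * ((j : ℝ) * m))) * sawG n m j x

/-- The dyadic subcube `Q(n,k) = {x' : 2^{nm}·x' − k ∈ (0,1)^{d-1}}`. -/
def sawQ (dd m n : ℕ) (k : Fin dd → Fin (2 ^ (n * m))) : Set (Fin dd → ℝ) :=
  {x | ∀ i, (k i : ℝ) < 2 ^ (n * m) * x i ∧ 2 ^ (n * m) * x i < (k i : ℝ) + 1}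

/-- `a_{n,k} = sup_{x' ∈ Q(n,k)} f_{n−1}(x')`. -/
noncomputable def sawA (dd m : ℕ) (γ : ℝ) (n : ℕ) (k : Fin dd → Fin (2 ^ (n * m))) : ℝ :=
  sSup (sawFpartial dd m γ n '' sawQ dd m n k)

lemma sawPsi_eq (n : ℕ) (y : Fin n → ℝ) :
    sawPsi n y = max 0 (1 / 2 - ‖y - fun _ => (1 / 2 : ℝ)‖) := by
  unfold sawPsi
  by_cases h : ∀ i, 0 < y i ∧ y i < 1
  · rw [Set.indicator_of_mem (show y ∈ {y : Fin n → ℝ | ∀ i, 0 < y i ∧ y i < 1} from h)]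
    refine (max_eq_right ?_).symm
    have hle : ‖y - fun _ => (1 / 2 : ℝ)‖ ≤ 1 / 2 := by
      refine (pi_norm_le_iff_of_nonneg (by norm_num)).2 fun i => ?_
      have hi := h i
      rw [Pi.sub_apply, Real.norm_eq_abs, abs_le]
      constructor <;> [linarith [hi.2]; linarith [hi.1]]
    linarith
  · rw [Set.indicator_of_notMem (show y ∉ {y : Fin n → ℝ | ∀ i, 0 < y i ∧ y i < 1} from h)]
    push_neg at h
    obtain ⟨i, hi⟩ := h
    have h2 : (1 : ℝ) / 2 ≤ |y i - 1 / 2| := by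
      rcases le_or_gt (y i) 0 with h' | h'
      · rw [abs_of_nonpos (by linarith)]; linarith
      · have h1 : 1 ≤ y i := hi h'
        rw [abs_of_nonneg (by linarith)]; linarith
    have h3 := norm_le_pi_norm (y - fun _ => (1 / 2 : ℝ)) i
    rw [Pi.sub_apply, Real.norm_eq_abs] at h3
    exact (max_eq_left (by linarith)).symm

lemma sawPsi_nonneg (n : ℕ) (y : Fin n → ℝ) : 0 ≤ sawPsi n y := by
  rw [sawPsi_eq]; exact le_max_left _ _

lemma sawPsi_le_half (n : ℕ) (y : Fin n → ℝ) : sawPsi n y ≤ 1 / 2 := by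
  rw [sawPsi_eq]
  have := norm_nonneg (y - fun _ => (1 / 2 : ℝ))
  apply max_le <;> linarith

lemma sawPsi_lipschitz (n : ℕ) (y z : Fin n → ℝ) :
    |sawPsi n y - sawPsi n z| ≤ ‖y - z‖ := by
  rw [sawPsi_eq, sawPsi_eq, max_comm 0 _, max_comm 0 _]
  refine le_trans (abs_max_sub_max_le_abs _ _ _) ?_
  have h1 : |‖y - fun _ => (1/2:ℝ)‖ - ‖z - fun _ => (1/2:ℝ)‖| ≤
      ‖(y - fun _ => (1/2:ℝ)) - (z - fun _ => (1/2:ℝ))‖ := abs_norm_sub_norm_le _ _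
  have h2 : (y - fun _ => (1/2:ℝ)) - (z - fun _ => (1/2:ℝ)) = y - z := by abel
  rw [h2] at h1
  calc |(1/2 - ‖y - fun _ => (1/2:ℝ)‖) - (1/2 - ‖z - fun _ => (1/2:ℝ)‖)|
      = |‖y - fun _ => (1/2:ℝ)‖ - ‖z - fun _ => (1/2:ℝ)‖| := by rw [abs_sub_comm]; ring_nf
    _ ≤ ‖y - z‖ := h1

lemma sawPsi_eq_zero (n : ℕ) (y : Fin n → ℝ) (i : Fin n) (hi : ¬(0 < y i ∧ y i < 1)) :
    sawPsi n y = 0 :=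
  Set.indicator_of_notMem (fun h => hi ((Set.mem_setOf_eq ▸ h) i)) _

lemma abs_sup'_sub_sup'_le {α : Type*} (s : Finset α) (hs : s.Nonempty) (f g : α → ℝ) (C : ℝ)
    (h : ∀ a ∈ s, |f a - g a| ≤ C) : |s.sup' hs f - s.sup' hs g| ≤ C := by
  rw [abs_sub_le_iff]
  constructor
  · rw [sub_le_iff_le_add]
    refine Finset.sup'_le _ _ fun a ha => ?_
    have h1 := (abs_sub_le_iff.1 (h a ha)).1
    have h2 := Finset.le_sup' g ha
    linarith
  · rw [sub_le_iff_le_add]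
    refine Finset.sup'_le _ _ fun a ha => ?_
    have h1 := (abs_sub_le_iff.1 (h a ha)).2
    have h2 := Finset.le_sup' f ha
    linarith

lemma sawNonempty (n m j : ℕ) : (Finset.univ : Finset (Fin n → Fin (2 ^ (j * m)))).Nonempty :=
  ⟨fun _ => ⟨0, pow_pos (by norm_num) _⟩, Finset.mem_univ _⟩

lemma sawG_exists_k0 (n m j : ℕ) (x : Fin n → ℝ) (hx : ∀ i, 0 < x i ∧ x i < 1) :
    ∃ k0 : Fin n → Fin (2 ^ (j * m)), ∀ k : Fin n → Fin (2 ^ (j * m)), k ≠ k0 →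
      sawPsi n (fun i => 2 ^ (j * m) * x i - (k i : ℝ)) = 0 := by
  set t : Fin n → ℝ := fun i => 2 ^ (j * m) * x i with ht
  have htpos : ∀ i, 0 < t i := fun i => by
    have := (hx i).1; positivity
  have htlt : ∀ i, t i < 2 ^ (j * m) := fun i => by
    have h1 := (hx i).2
    have h2 : (0:ℝ) < 2 ^ (j * m) := by positivity
    calc t i = 2 ^ (j * m) * x i := rfl
      _ < 2 ^ (j * m) * 1 := by exact mul_lt_mul_of_pos_left h1 h2
      _ = 2 ^ (j * m) := mul_one _
  have hfl : ∀ i, (⌊t i⌋).toNat < 2 ^ (j * m) := by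
    intro i
    have h1 : ⌊t i⌋ < (2 ^ (j * m) : ℕ) := by
      rw [Int.floor_lt]; push_cast; exact htlt i
    have hp : 0 < 2 ^ (j * m) := pow_pos two_pos _
    omega
  refine ⟨fun i => ⟨(⌊t i⌋).toNat, hfl i⟩, fun k hk => ?_⟩
  have : ∃ i, k i ≠ ⟨(⌊t i⌋).toNat, hfl i⟩ := by
    by_contra hc
    push_neg at hc
    exact hk (funext hc)
  obtain ⟨i, hi⟩ := this
  have hne : ((k i : ℕ) : ℤ) ≠ ⌊t i⌋ := by
    intro h
    apply hi
    have h0 : (0:ℤ) ≤ ⌊t i⌋ := Int.floor_nonneg.2 (le_of_lt (htpos i))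
    apply Fin.ext
    show (k i : ℕ) = (⌊t i⌋).toNat
    omega
  refine sawPsi_eq_zero n _ i ?_
  show ¬(0 < t i - (k i : ℝ) ∧ t i - (k i : ℝ) < 1)
  rcases lt_or_gt_of_ne hne with h' | h'
  · -- k i ≤ ⌊t i⌋ - 1, so t i - k i ≥ 1
    have h1 : ((k i : ℕ) : ℤ) + 1 ≤ ⌊t i⌋ := h'
    have h2 : ((k i : ℕ) : ℝ) + 1 ≤ t i := by
      have := Int.floor_le (t i)
      have h3 : (((k i : ℕ) : ℤ) : ℝ) + 1 ≤ (⌊t i⌋ : ℝ) := by exact_mod_cast h1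
      push_cast at h3 ⊢
      linarith
    intro hcon
    linarith [hcon.2]
  · -- k i ≥ ⌊t i⌋ + 1 > t i
    have h1 : ⌊t i⌋ + 1 ≤ ((k i : ℕ) : ℤ) := h'
    have h2 : t i ≤ ((k i : ℕ) : ℝ) := by
      have h4 := Int.lt_floor_add_one (t i)
      have h3 : ((⌊t i⌋ : ℝ) + 1) ≤ ((k i : ℕ) : ℝ) := by exact_mod_cast h1
      linarith
    intro hcon
    linarith [hcon.1]

lemma sawG_eq_sup (n m j : ℕ) (x : Fin n → ℝ) (hx : ∀ i, 0 < x i ∧ x i < 1) :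
    sawG n m j x = Finset.univ.sup' (sawNonempty n m j)
      (fun k => sawPsi n (fun i => 2 ^ (j * m) * x i - (k i : ℝ))) := by
  obtain ⟨k0, hk0⟩ := sawG_exists_k0 n m j x hx
  have hsum : sawG n m j x = sawPsi n (fun i => 2 ^ (j * m) * x i - (k0 i : ℝ)) := by
    unfold sawG
    exact Finset.sum_eq_single_of_mem k0 (Finset.mem_univ _) (fun k _ hk => hk0 k hk)
  rw [hsum]
  refine le_antisymm (Finset.le_sup' (fun k : Fin n → Fin (2 ^ (j * m)) => sawPsi n fun i => 2 ^ (j * m) * x i - (k i : ℝ)) (Finset.mem_univ k0)) ?_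
  refine Finset.sup'_le _ _ fun k _ => ?_
  rcases eq_or_ne k k0 with rfl | hk
  · exact le_refl _
  · rw [hk0 k hk]
    exact sawPsi_nonneg _ _

lemma sawG_nonneg (n m j : ℕ) (x : Fin n → ℝ) (hx : ∀ i, 0 < x i ∧ x i < 1) :
    0 ≤ sawG n m j x := by
  rw [sawG_eq_sup n m j x hx]
  obtain ⟨k, hk⟩ := sawNonempty n m j
  exact le_trans (sawPsi_nonneg _ _) (Finset.le_sup' (fun k : Fin n → Fin (2 ^ (j * m)) => sawPsi n fun i => 2 ^ (j * m) * x i - (k i : ℝ)) hk)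

lemma sawG_le_half (n m j : ℕ) (x : Fin n → ℝ) (hx : ∀ i, 0 < x i ∧ x i < 1) :
    sawG n m j x ≤ 1 / 2 := by
  rw [sawG_eq_sup n m j x hx]
  exact Finset.sup'_le _ _ fun k _ => sawPsi_le_half _ _

lemma sawG_lip (n m j : ℕ) (x y : Fin n → ℝ) (hx : ∀ i, 0 < x i ∧ x i < 1)
    (hy : ∀ i, 0 < y i ∧ y i < 1) :
    |sawG n m j x - sawG n m j y| ≤ 2 ^ (j * m) * ‖x - y‖ := by
  rw [sawG_eq_sup n m j x hx, sawG_eq_sup n m j y hy]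
  refine abs_sup'_sub_sup'_le _ _ _ _ _ fun k _ => ?_
  refine le_trans (sawPsi_lipschitz n _ _) ?_
  have heq : (fun i => 2 ^ (j * m) * x i - (k i : ℝ)) - (fun i => 2 ^ (j * m) * y i - (k i : ℝ))
      = (2 ^ (j * m) : ℝ) • (x - y) := by
    funext i
    simp [Pi.sub_apply, Pi.smul_apply]
    ring
  rw [heq, norm_smul, Real.norm_eq_abs, abs_of_pos (by positivity)]

set_option maxHeartbeats 1000000 in
/-- Lemma 7.2(i): the sawtooth function `f` is γ-Hölder continuous
with constant 3 with respect to the sup norm on `(0,1)^{d-1}`. -/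
theorem sawF_holder (d m : ℕ) (γ : ℝ) (hd : 2 ≤ d)
    (hγ1 : ((d : ℝ) - 1) / d < γ) (hγ2 : γ < 1)
    (hm1 : 1 ≤ (m : ℝ) * γ) (hm2 : 4 ≤ (m : ℝ) * (1 - γ))
    (x y : Fin (d - 1) → ℝ)
    (hx : ∀ i, 0 < x i ∧ x i < 1) (hy : ∀ i, 0 < y i ∧ y i < 1) :
    |sawF (d - 1) m γ x - sawF (d - 1) m γ y| ≤ 3 * ‖x - y‖ ^ γ := by
  classical
  have hm0 : (0:ℝ) ≤ m := Nat.cast_nonneg m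
  have hγ0 : 0 < γ := by nlinarith
  have hmR : (4:ℝ) ≤ m := by nlinarith
  have hmn : 1 ≤ m := by exact_mod_cast (by linarith : (1:ℝ) ≤ (m:ℝ))
  -- q = 2^{-γm}
  set q : ℝ := (2:ℝ) ^ (-(γ * (m:ℝ))) with hq
  have hq0 : 0 < q := Real.rpow_pos_of_pos (by norm_num) _
  have h2neg1 : (2:ℝ) ^ (-1 : ℝ) = 1/2 := by
    rw [Real.rpow_neg (by norm_num), Real.rpow_one]; norm_num
  have hqhalf : q ≤ 1 / 2 := by
    have h1 : (2:ℝ) ^ (-(γ * (m:ℝ))) ≤ (2:ℝ) ^ (-1 : ℝ) :=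
      Real.rpow_le_rpow_of_exponent_le (by norm_num) (by linarith)
    rw [h2neg1] at h1; exact h1
  have hq1 : q < 1 := by linarith
  have ha : ∀ j : ℕ, (2:ℝ) ^ (-(γ * ((j:ℝ) * m))) = q ^ j := by
    intro j
    rw [show (-(γ * ((j:ℝ) * m))) = (-(γ * (m:ℝ))) * (j:ℝ) by ring,
      Real.rpow_mul (by norm_num), Real.rpow_natCast]
  -- r = 2^{(1-γ)m}
  set r : ℝ := (2:ℝ) ^ ((1 - γ) * (m:ℝ)) with hr
  have hr16 : (16:ℝ) ≤ r := by
    have h1 : (2:ℝ) ^ (4:ℝ) ≤ (2:ℝ) ^ ((1-γ)*(m:ℝ)) :=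
      Real.rpow_le_rpow_of_exponent_le (by norm_num) (by nlinarith)
    have h4 : (2:ℝ) ^ (4:ℝ) = 16 := by
      rw [show (4:ℝ) = ((4:ℕ):ℝ) by norm_num, Real.rpow_natCast]; norm_num
    linarith
  have ha2 : ∀ j : ℕ, q ^ j * (2:ℝ) ^ (j * m) = r ^ j := by
    intro j
    rw [← ha j, ← Real.rpow_natCast 2 (j*m), ← Real.rpow_add (by norm_num : (0:ℝ) < 2),
      hr, ← Real.rpow_natCast ((2:ℝ) ^ ((1-γ)*(m:ℝ))) j, ← Real.rpow_mul (by norm_num)]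
    congr 1
    push_cast
    ring
  set h := ‖x - y‖ with hh
  have h0 : 0 ≤ h := norm_nonneg _
  rcases eq_or_lt_of_le h0 with hz | hpos
  · have hxy : x = y := by
      have := norm_sub_eq_zero_iff.1 hz.symm
      exact this
    rw [hxy, sub_self, abs_zero]
    positivity
  have hlt1 : h < 1 := by
    rw [hh]
    refine (pi_norm_lt_iff (by norm_num)).2 fun i => ?_
    rw [Pi.sub_apply, Real.norm_eq_abs, abs_lt]
    constructor
    · linarith [(hx i).1, (hy i).2]
    · linarith [(hx i).2, (hy i).1]
  -- choose J
  have hex : ∃ J : ℕ, 1 ≤ (2:ℝ) ^ (J * m) * h := by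
    obtain ⟨K, hK⟩ := pow_unbounded_of_one_lt (1/h) (by norm_num : (1:ℝ) < 2)
    refine ⟨K, ?_⟩
    have h2 : (2:ℝ) ^ K ≤ 2 ^ (K * m) :=
      pow_le_pow_right₀ (by norm_num) (Nat.le_mul_of_pos_right K (by omega))
    have h3 : (1:ℝ)/h < 2 ^ (K * m) := lt_of_lt_of_le hK h2
    exact (div_le_iff₀ hpos).1 h3.le
  set J := Nat.find hex with hJdef
  have hJ : 1 ≤ (2:ℝ) ^ (J * m) * h := Nat.find_spec hex
  have hJ1 : 1 ≤ J := by
    by_contra hc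
    push_neg at hc
    interval_cases J
    · simp only [Nat.zero_mul, pow_zero, one_mul] at hJ
      linarith
  have hJ' : (2:ℝ) ^ ((J-1) * m) * h < 1 :=
    not_le.1 (Nat.find_min hex (by omega : J - 1 < J))
  -- bounds on sawG differences
  have hgb : ∀ j, |sawG (d-1) m j x - sawG (d-1) m j y| ≤ 1/2 := fun j => by
    have h1 := sawG_nonneg (d-1) m j x hx
    have h2 := sawG_le_half (d-1) m j x hx
    have h3 := sawG_nonneg (d-1) m j y hy
    have h4 := sawG_le_half (d-1) m j y hy
    rw [abs_sub_le_iff]; constructor <;> linarith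
  set c : ℕ → ℝ := fun j => q ^ j * |sawG (d-1) m j x - sawG (d-1) m j y| with hc
  have hcnn : ∀ j, 0 ≤ c j := fun j => mul_nonneg (by positivity) (abs_nonneg _)
  have hcle : ∀ j, c j ≤ q ^ j * (1/2) := fun j =>
    mul_le_mul_of_nonneg_left (hgb j) (by positivity)
  have hgeo : Summable (fun j : ℕ => q ^ j * (1/2)) :=
    (summable_geometric_of_lt_one hq0.le hq1).mul_right _
  have hcsum : Summable c := Summable.of_nonneg_of_le hcnn hcle hgeo
  have hsx : Summable (fun j : ℕ => (2:ℝ) ^ (-(γ*((j:ℝ)*m))) * sawG (d-1) m j x) := by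
    refine Summable.of_nonneg_of_le (fun j => ?_) (fun j => ?_) hgeo
    · rw [ha j]; exact mul_nonneg (by positivity) (sawG_nonneg (d-1) m j x hx)
    · rw [ha j]; exact mul_le_mul_of_nonneg_left (sawG_le_half (d-1) m j x hx) (by positivity)
  have hsy : Summable (fun j : ℕ => (2:ℝ) ^ (-(γ*((j:ℝ)*m))) * sawG (d-1) m j y) := by
    refine Summable.of_nonneg_of_le (fun j => ?_) (fun j => ?_) hgeo
    · rw [ha j]; exact mul_nonneg (by positivity) (sawG_nonneg (d-1) m j y hy)
    · rw [ha j]; exact mul_le_mul_of_nonneg_left (sawG_le_half (d-1) m j y hy) (by positivity)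
  have hdiff : ∀ j : ℕ, |(2:ℝ) ^ (-(γ*((j:ℝ)*m))) * sawG (d-1) m j x
      - (2:ℝ) ^ (-(γ*((j:ℝ)*m))) * sawG (d-1) m j y| = c j := fun j => by
    rw [ha j, ← mul_sub, abs_mul, abs_of_nonneg (by positivity : (0:ℝ) ≤ q ^ j)]
  have hstep1 : |sawF (d-1) m γ x - sawF (d-1) m γ y| ≤ ∑' j, c j := by
    rw [sawF, sawF, ← Summable.tsum_sub hsx hsy]
    have habs : Summable (fun j : ℕ => |(2:ℝ) ^ (-(γ*((j:ℝ)*m))) * sawG (d-1) m j x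
        - (2:ℝ) ^ (-(γ*((j:ℝ)*m))) * sawG (d-1) m j y|) :=
      hcsum.congr (fun j => (hdiff j).symm)
    calc |∑' j : ℕ, ((2:ℝ) ^ (-(γ*((j:ℝ)*m))) * sawG (d-1) m j x
          - (2:ℝ) ^ (-(γ*((j:ℝ)*m))) * sawG (d-1) m j y)|
        ≤ ∑' j : ℕ, |(2:ℝ) ^ (-(γ*((j:ℝ)*m))) * sawG (d-1) m j x
          - (2:ℝ) ^ (-(γ*((j:ℝ)*m))) * sawG (d-1) m j y| := by
          have := norm_tsum_le_tsum_norm (f := fun j : ℕ =>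
            (2:ℝ) ^ (-(γ*((j:ℝ)*m))) * sawG (d-1) m j x
            - (2:ℝ) ^ (-(γ*((j:ℝ)*m))) * sawG (d-1) m j y) (by simpa [Real.norm_eq_abs] using habs)
          simpa [Real.norm_eq_abs] using this
      _ = ∑' j, c j := tsum_congr hdiff
  have hsplit : ∑' j, c j = (∑ j ∈ Finset.range J, c j) + ∑' j, c (j + J) :=
    (Summable.sum_add_tsum_nat_add J hcsum).symm
  -- finite part
  have hfin : ∑ j ∈ Finset.range J, c j ≤ (16/15) * h ^ γ := by
    have hb : ∀ j ∈ Finset.range J, c j ≤ r ^ j * h := by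
      intro j _
      calc c j ≤ q ^ j * ((2:ℝ)^(j*m) * h) :=
            mul_le_mul_of_nonneg_left (sawG_lip (d-1) m j x y hx hy) (by positivity)
        _ = (q ^ j * (2:ℝ)^(j*m)) * h := by ring
        _ = r ^ j * h := by rw [ha2 j]
    have hr1 : (1:ℝ) ≤ r ^ (J-1) := one_le_pow₀ (by linarith)
    have hgeom : ∑ j ∈ Finset.range J, r ^ j ≤ (16/15) * r ^ (J-1) := by
      rw [geom_sum_eq (by linarith : r ≠ 1)]
      have hrJ : r ^ J = r * r ^ (J - 1) := by
        conv_lhs => rw [show J = (J - 1) + 1 by omega]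
        rw [pow_succ]; ring
      rw [hrJ, div_le_iff₀ (by linarith : (0:ℝ) < r - 1)]
      nlinarith
    have hkey : h * r ^ (J-1) ≤ h ^ γ := by
      have e1 : r ^ (J-1) = ((2:ℝ) ^ ((J-1)*m)) ^ (1-γ) := by
        rw [← Real.rpow_natCast 2 ((J-1)*m), ← Real.rpow_mul (by norm_num),
          hr, ← Real.rpow_natCast ((2:ℝ) ^ ((1-γ)*(m:ℝ))) (J-1),
          ← Real.rpow_mul (by norm_num)]
        congr 1
        push_cast
        ring
      have e2 : h = h ^ γ * h ^ (1-γ) := by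
        rw [← Real.rpow_add hpos, show γ + (1-γ) = 1 by ring, Real.rpow_one]
      calc h * r ^ (J-1) = h ^ γ * (h ^ (1-γ) * ((2:ℝ) ^ ((J-1)*m)) ^ (1-γ)) := by
            rw [e1]; nth_rewrite 1 [e2]; ring
        _ = h ^ γ * ((h * (2:ℝ) ^ ((J-1)*m)) ^ (1-γ)) := by
            rw [Real.mul_rpow h0 (by positivity)]
        _ ≤ h ^ γ * 1 := by
            refine mul_le_mul_of_nonneg_left ?_ (Real.rpow_nonneg h0 _)
            refine Real.rpow_le_one (by positivity) ?_ (by linarith)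
            nlinarith
        _ = h ^ γ := mul_one _
    calc ∑ j ∈ Finset.range J, c j ≤ ∑ j ∈ Finset.range J, r ^ j * h :=
          Finset.sum_le_sum hb
      _ = (∑ j ∈ Finset.range J, r ^ j) * h := by rw [Finset.sum_mul]
      _ ≤ ((16/15) * r ^ (J-1)) * h := mul_le_mul_of_nonneg_right hgeom h0
      _ = (16/15) * (h * r ^ (J-1)) := by ring
      _ ≤ (16/15) * h ^ γ := mul_le_mul_of_nonneg_left hkey (by norm_num)
  -- q^J ≤ h^γ
  have hqJ : q ^ J ≤ h ^ γ := by
    have h1 : ((2:ℝ) ^ (J*m))⁻¹ ≤ h := by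
      rw [inv_eq_one_div, div_le_iff₀ (by positivity : (0:ℝ) < (2:ℝ)^(J*m))]
      linarith [hJ]
    have e1 : q ^ J = (((2:ℝ) ^ (J*m))⁻¹) ^ γ := by
      rw [← Real.rpow_natCast 2 (J*m), ← Real.rpow_neg (by norm_num : (0:ℝ) ≤ 2),
        ← Real.rpow_mul (by norm_num : (0:ℝ) ≤ 2),
        hq, ← Real.rpow_natCast ((2:ℝ) ^ (-(γ*(m:ℝ)))) J, ← Real.rpow_mul (by norm_num)]
      congr 1
      push_cast
      ring
    rw [e1]
    exact Real.rpow_le_rpow (by positivity) h1 hγ0.le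
  -- tail
  have htail : ∑' j, c (j + J) ≤ h ^ γ := by
    have hb : ∀ j : ℕ, c (j + J) ≤ q ^ J * (1/2) * q ^ j := fun j => by
      calc c (j+J) ≤ q^(j+J) * (1/2) := hcle _
        _ = q^J * (1/2) * q^j := by rw [pow_add]; ring
    have hsum2 : Summable (fun j : ℕ => q^J*(1/2)*q^j) :=
      (summable_geometric_of_lt_one hq0.le hq1).mul_left _
    have hcsum' : Summable (fun j => c (j + J)) := (summable_nat_add_iff J).2 hcsum
    calc ∑' j, c (j+J) ≤ ∑' j : ℕ, q^J*(1/2)*q^j := Summable.tsum_le_tsum hb hcsum' hsum2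
      _ = q^J*(1/2) * ∑' j : ℕ, q^j := tsum_mul_left
      _ = q^J*(1/2) * (1 - q)⁻¹ := by rw [tsum_geometric_of_lt_one hq0.le hq1]
      _ ≤ q^J := by
          have hinv : (1-q)⁻¹ ≤ 2 := by
            rw [show (2:ℝ) = ((1:ℝ)/2)⁻¹ by norm_num]
            exact inv_anti₀ (by norm_num) (by linarith)
          have hqJ0 : (0:ℝ) ≤ q ^ J * (1/2) := by positivity
          nlinarith [pow_pos hq0 J]
      _ ≤ h ^ γ := hqJ
  calc |sawF (d-1) m γ x - sawF (d-1) m γ y| ≤ ∑' j, c j := hstep1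
    _ = (∑ j ∈ Finset.range J, c j) + ∑' j, c (j + J) := hsplit
    _ ≤ (16/15) * h ^ γ + h ^ γ := add_le_add hfin htail
    _ ≤ 3 * h ^ γ := by nlinarith [Real.rpow_nonneg h0 γ]
end

section
/- With the notation of the previous construction (γ ∈ ((d-1)/d,1), m with mγ ≥ 1, m(1−γ) ≥ 4, g_j and partial sums f_n = Σ_{j=0}^n 2^{−γjm} g_j, f_{−1} ≡ 0): for every n ∈ ℕ₀, every k ∈ {0,…,2^{nm}−1}^{d-1}, and all x', y' in the cube Q(n,k) = {x' : 2^{nm}x' − k ∈ (0,1)^{d-1}}, one has |f_{n−1}(x') − f_{n−1}(y')| ≤ (1/8)·2^{−γmn}. -/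
/-!
On `Q(n,k)` each `g_j` with `j < n` is a single tent `ψ(2^{jm}x' − K)` (the cube lies inside one
level-`j` cube), hence `2^{jm}`-Lipschitz, while `Q(n,k)` has sup-diameter `2^{−nm}`. So the `j`-th
term of `f_{n−1}` oscillates by at most `2^{−nm} r^j` with `r = 2^{(1−γ)m} ≥ 16`, and the geometric
sum is at most `2^{−nm} r^n / (r − 1) ≤ 2^{−nm} r^n / 8 = 2^{−γmn} / 8`.
-/

open Finset

lemma geom_sum_le_pow_div_sub_one {r : ℝ} (hr : 1 < r) (n : ℕ) :
    ∑ i ∈ range n, r ^ i ≤ r ^ n / (r - 1) := by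
  rw [le_div_iff₀ (sub_pos.mpr hr), geom_sum_mul]
  linarith

lemma natCast_div_lt_and_lt_add_one {k q : ℕ} (hq : 0 < q) {s : ℝ}
    (h₁ : (k : ℝ) < q * s) (h₂ : q * s < k + 1) :
    ((k / q : ℕ) : ℝ) < s ∧ s < (k / q : ℕ) + 1 := by
  have hqR : (0 : ℝ) < q := by exact_mod_cast hq
  have hlow : ((k / q : ℕ) : ℝ) * q ≤ k := by exact_mod_cast Nat.div_mul_le_self k q
  have hhigh : (k : ℝ) + 1 ≤ ((k / q : ℕ) + 1) * q := by
    exact_mod_cast (Nat.lt_div_mul_add (a := k) hq).trans_le (by rw [Nat.add_mul, one_mul])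
  constructor <;> nlinarith

lemma sawPsi_abs_sub_le {dd : ℕ} {a b : Fin dd → ℝ} (ha : ∀ i, 0 < a i ∧ a i < 1)
    (hb : ∀ i, 0 < b i ∧ b i < 1) :
    |sawPsi dd a - sawPsi dd b| ≤ ‖a - b‖ := by
  set c : Fin dd → ℝ := fun _ => 1 / 2
  have hψ : ∀ z : Fin dd → ℝ, (∀ i, 0 < z i ∧ z i < 1) → sawPsi dd z = 1 / 2 - ‖z - c‖ :=
    fun z hz => Set.indicator_of_mem (s := {y : Fin dd → ℝ | ∀ i, 0 < y i ∧ y i < 1}) hz _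
  rw [hψ a ha, hψ b hb, sub_sub_sub_cancel_left, abs_sub_comm]
  simpa only [sub_sub_sub_cancel_right] using abs_norm_sub_norm_le (a - c) (b - c)

section DyadicCubes

variable {dd m : ℕ}

lemma exists_sawQ_superset {j n : ℕ} (hjn : j ≤ n) (k : Fin dd → Fin (2 ^ (n * m))) :
    ∃ K : Fin dd → Fin (2 ^ (j * m)), sawQ dd m n k ⊆ sawQ dd m j K := by
  set p := (n - j) * m
  have hsplit : n * m = j * m + p := by rw [← Nat.add_mul]; congr 1; omega
  have hp : 0 < 2 ^ p := Nat.two_pow_pos p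
  refine ⟨fun i => ⟨k i / 2 ^ p, ?_⟩, fun x hx i => ?_⟩
  · rw [Nat.div_lt_iff_lt_mul hp, ← pow_add, ← hsplit]
    exact (k i).2
  · have hscale : (2 : ℝ) ^ (n * m) * x i = ((2 ^ p : ℕ) : ℝ) * (2 ^ (j * m) * x i) := by
      rw [hsplit, pow_add]; push_cast; ring
    obtain ⟨h₁, h₂⟩ := hx i
    rw [hscale] at h₁ h₂
    exact natCast_div_lt_and_lt_add_one hp h₁ h₂

lemma norm_sub_le_of_mem_sawQ {n : ℕ} {k : Fin dd → Fin (2 ^ (n * m))}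
    {x y : Fin dd → ℝ} (hx : x ∈ sawQ dd m n k) (hy : y ∈ sawQ dd m n k) :
    ‖x - y‖ ≤ ((2 : ℝ) ^ (n * m))⁻¹ := by
  refine (pi_norm_le_iff_of_nonneg (by positivity)).mpr fun i => ?_
  obtain ⟨hx₁, hx₂⟩ := hx i
  obtain ⟨hy₁, hy₂⟩ := hy i
  have hpos : (0 : ℝ) < 2 ^ (n * m) := by positivity
  rw [Pi.sub_apply, Real.norm_eq_abs, ← one_div, le_div_iff₀ hpos, ← abs_of_pos hpos, ← abs_mul]
  exact abs_le.mpr ⟨by linarith, by linarith⟩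

lemma sawG_eq_sawPsi_of_mem_sawQ {j : ℕ} {K : Fin dd → Fin (2 ^ (j * m))}
    {x : Fin dd → ℝ} (hx : x ∈ sawQ dd m j K) :
    sawG dd m j x = sawPsi dd (fun i => 2 ^ (j * m) * x i - K i) := by
  refine Finset.sum_eq_single_of_mem K (mem_univ K) fun K' _ hK' => ?_
  refine Set.indicator_of_notMem (fun hK'x => hK' (funext fun i => Fin.ext ?_)) _
  have hnonneg : (0 : ℝ) ≤ 2 ^ (j * m) * x i := (Nat.cast_nonneg _).trans (hx i).1.le
  obtain ⟨h₁, h₂⟩ := hK'x i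
  obtain ⟨h₃, h₄⟩ := hx i
  exact ((Nat.floor_eq_iff hnonneg).mpr ⟨by linarith, by linarith⟩).symm.trans
    ((Nat.floor_eq_iff hnonneg).mpr ⟨h₃.le, h₄⟩)

lemma sawG_abs_sub_le {j : ℕ} {K : Fin dd → Fin (2 ^ (j * m))}
    {x y : Fin dd → ℝ} (hx : x ∈ sawQ dd m j K) (hy : y ∈ sawQ dd m j K) :
    |sawG dd m j x - sawG dd m j y| ≤ 2 ^ (j * m) * ‖x - y‖ := by
  have hunit : ∀ z ∈ sawQ dd m j K, ∀ i,
      0 < 2 ^ (j * m) * z i - K i ∧ 2 ^ (j * m) * z i - K i < 1 :=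
    fun z hz i => ⟨by linarith [(hz i).1], by linarith [(hz i).2]⟩
  rw [sawG_eq_sawPsi_of_mem_sawQ hx, sawG_eq_sawPsi_of_mem_sawQ hy]
  refine (sawPsi_abs_sub_le (hunit x hx) (hunit y hy)).trans_eq ?_
  have hdiff : ((fun i => 2 ^ (j * m) * x i - K i) - fun i => 2 ^ (j * m) * y i - K i) =
      (2 : ℝ) ^ (j * m) • (x - y) := by
    funext i; simp only [Pi.sub_apply, Pi.smul_apply, smul_eq_mul]; ring
  rw [hdiff, norm_smul, Real.norm_of_nonneg (by positivity)]

lemma sawG_abs_sub_le_of_le {j n : ℕ} (hjn : j ≤ n) {k : Fin dd → Fin (2 ^ (n * m))}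
    {x y : Fin dd → ℝ} (hx : x ∈ sawQ dd m n k) (hy : y ∈ sawQ dd m n k) :
    |sawG dd m j x - sawG dd m j y| ≤ 2 ^ (j * m) * ((2 : ℝ) ^ (n * m))⁻¹ := by
  obtain ⟨K, hK⟩ := exists_sawQ_superset hjn k
  calc _ ≤ 2 ^ (j * m) * ‖x - y‖ := sawG_abs_sub_le (hK hx) (hK hy)
    _ ≤ _ := by gcongr; exact norm_sub_le_of_mem_sawQ hx hy

end DyadicCubes

lemma two_rpow_one_sub_mul_pow (γ : ℝ) (m j : ℕ) :
    ((2 : ℝ) ^ ((1 - γ) * m)) ^ j = 2 ^ (j * m) * (2 : ℝ) ^ (-(γ * (j * m))) := by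
  rw [← Real.rpow_natCast _ j, ← Real.rpow_mul zero_le_two, ← Real.rpow_natCast 2 (j * m),
    ← Real.rpow_add two_pos]
  push_cast
  ring_nf

theorem sawFpartial_osc_general (d m : ℕ) (γ : ℝ)
    (hm2 : 4 ≤ (m : ℝ) * (1 - γ))
    (n : ℕ) (k : Fin (d - 1) → Fin (2 ^ (n * m)))
    (x y : Fin (d - 1) → ℝ)
    (hx : x ∈ sawQ (d - 1) m n k) (hy : y ∈ sawQ (d - 1) m n k) :
    |sawFpartial (d - 1) m γ n x - sawFpartial (d - 1) m γ n y| ≤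
      (1 / 8) * (2 : ℝ) ^ (-(γ * ((m : ℝ) * n))) := by
  set r : ℝ := (2 : ℝ) ^ ((1 - γ) * m)
  have hr : 16 ≤ r := by
    calc (16 : ℝ) = 2 ^ (4 : ℝ) := by norm_num
      _ ≤ r := Real.rpow_le_rpow_of_exponent_le one_le_two (by linarith)
  have hterm : ∀ j ∈ range n, |2 ^ (-(γ * (j * m))) * sawG (d - 1) m j x -
      2 ^ (-(γ * (j * m))) * sawG (d - 1) m j y| ≤ ((2 : ℝ) ^ (n * m))⁻¹ * r ^ j := by
    intro j hj
    rw [← mul_sub, abs_mul, abs_of_pos (by positivity), two_rpow_one_sub_mul_pow]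
    calc _ ≤ (2 : ℝ) ^ (-(γ * (j * m))) * (2 ^ (j * m) * ((2 : ℝ) ^ (n * m))⁻¹) := by
          gcongr
          exact sawG_abs_sub_le_of_le (mem_range.mp hj).le hx hy
      _ = _ := by ring
  calc |sawFpartial (d - 1) m γ n x - sawFpartial (d - 1) m γ n y|
      ≤ ∑ j ∈ range n, ((2 : ℝ) ^ (n * m))⁻¹ * r ^ j := by
        rw [sawFpartial, sawFpartial, ← sum_sub_distrib]
        exact (abs_sum_le_sum_abs _ _).trans (sum_le_sum hterm)
    _ ≤ ((2 : ℝ) ^ (n * m))⁻¹ * (r ^ n / 8) := by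
        rw [← mul_sum]
        gcongr
        exact (geom_sum_le_pow_div_sub_one (by linarith) n).trans
          (div_le_div_of_nonneg_left (by positivity) (by norm_num) (by linarith))
    _ = (1 / 8) * (2 : ℝ) ^ (-(γ * ((m : ℝ) * n))) := by
        rw [two_rpow_one_sub_mul_pow, mul_comm (m : ℝ)]
        field_simp

/-- Lemma 7.2(ii): on each dyadic subcube `Q(n,k)`, the partial sum
`f_{n−1}` oscillates by at most `(1/8)·2^{−γmn}`. -/
theorem sawFpartial_osc (d m : ℕ) (γ : ℝ) (hd : 2 ≤ d)
    (hγ1 : ((d : ℝ) - 1) / d < γ) (hγ2 : γ < 1)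
    (hm1 : 1 ≤ (m : ℝ) * γ) (hm2 : 4 ≤ (m : ℝ) * (1 - γ))
    (n : ℕ) (k : Fin (d - 1) → Fin (2 ^ (n * m)))
    (x y : Fin (d - 1) → ℝ)
    (hx : x ∈ sawQ (d - 1) m n k) (hy : y ∈ sawQ (d - 1) m n k) :
    |sawFpartial (d - 1) m γ n x - sawFpartial (d - 1) m γ n y| ≤
      (1 / 8) * (2 : ℝ) ^ (-(γ * ((m : ℝ) * n))) :=
  sawFpartial_osc_general d m γ hm2 n k x y hx hy
end
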